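/- arXiv:1909.09030 — 2 statements merged into one kernel-verified Lean document; each statement's English description precedes it below -/
import Mathlib

section
/- Let G be a finite graph and k an integer. Then the set S_k of all clique separations of G of order < k is structurally submodular: for any two oriented clique separations r⃗, s⃗ of order < k, at least one of r⃗ ∨ s⃗ and r⃗ ∧ s⃗ is again a clique separation of order < k. -/
/-!
The separator `A ∩ B` of `r = (A,B)` is a clique, and a clique cannot meet both `C \ D` and
`D \ C` for a separation `s = (C,D)`, so it lies in `C` or in `D`. If `A ∩ B ⊆ C`, then the
separator `(A ∪ C) ∩ B ∩ D` of `r ∨ s` lies inside the separator `C ∩ D` of `s`: it is a clique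
of order at most `|s|`. The join of two separations is always a separation, and the case
`A ∩ B ⊆ D` is the dual one for `r ∧ s = (r* ∨ s*)*`.
-/

variable {V : Type*} [Fintype V] [DecidableEq V]

/-- An oriented separation-candidate of a graph on `V`: a pair of vertex sets. -/
abbrev GSep (V : Type*) := Finset V × Finset V

/-- The involution `(A,B) ↦ (B,A)`. -/
def sepInv (p : GSep V) : GSep V := (p.2, p.1)

/-- The partial order `(A,B) ≤ (C,D)` iff `A ⊆ C` and `B ⊇ D`. -/
def sepLE (p q : GSep V) : Prop := p.1 ⊆ q.1 ∧ q.2 ⊆ p.2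

/-- Strict version of `sepLE`. -/
def sepLT (p q : GSep V) : Prop := sepLE p q ∧ p ≠ q

/-- The join `(A,B) ∨ (C,D) = (A ∪ C, B ∩ D)`. -/
def sepJoin (p q : GSep V) : GSep V := (p.1 ∪ q.1, p.2 ∩ q.2)

/-- The meet `(A,B) ∧ (C,D) = (A ∩ C, B ∪ D)`. -/
def sepMeet (p q : GSep V) : GSep V := (p.1 ∩ q.1, p.2 ∪ q.2)

/-- The order `|(A,B)| = |A ∩ B|`. -/
def sepOrder (p : GSep V) : ℕ := (p.1 ∩ p.2).card

/-- `(A,B)` is a separation of `G`: `A ∪ B = V` and `G` has no edge between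
`A \ B` and `B \ A`. -/
def IsSep (G : SimpleGraph V) (p : GSep V) : Prop :=
  p.1 ∪ p.2 = Finset.univ ∧
    ∀ a b : V, G.Adj a b → a ∈ p.1 → a ∉ p.2 → b ∈ p.2 → b ∉ p.1 → False

/-- Two separations are nested if they have `sepLE`-comparable orientations. -/
def sepNested (p q : GSep V) : Prop :=
  sepLE p q ∨ sepLE p (sepInv q) ∨ sepLE (sepInv p) q ∨ sepLE (sepInv p) (sepInv q)

/-- `c` is a corner separation of `p` and `q`: a join of orientations of `p`
and `q`, or the involution of such a join. -/
def sepIsCorner (c p q : GSep V) : Prop :=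
  ∃ p' q', (p' = p ∨ p' = sepInv p) ∧ (q' = q ∨ q' = sepInv q) ∧
    (c = sepJoin p' q' ∨ c = sepInv (sepJoin p' q'))

/-- `(A,B)` is a clique separation of `G`: a separation whose separator
`A ∩ B` induces a complete subgraph. -/
def IsCliqueSep (G : SimpleGraph V) (p : GSep V) : Prop :=
  IsSep G p ∧ G.IsClique ↑(p.1 ∩ p.2)

section

variable {α : Type*} [DecidableEq α]

theorem sepOrder_sepInv (p : GSep α) : sepOrder (sepInv p) = sepOrder p := by
  simp only [sepOrder, sepInv, Finset.inter_comm]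

theorem sepJoin_separator_subset {p q : GSep α} (h : p.1 ∩ p.2 ⊆ q.1) :
    (sepJoin p q).1 ∩ (sepJoin p q).2 ⊆ q.1 ∩ q.2 := by
  intro v hv
  simp only [sepJoin, Finset.mem_inter, Finset.mem_union] at hv ⊢
  exact ⟨hv.1.elim (fun hp => h (Finset.mem_inter.mpr ⟨hp, hv.2.1⟩)) id, hv.2.2⟩

theorem sepOrder_sepJoin_le_of_subset {p q : GSep α} (h : p.1 ∩ p.2 ⊆ q.1) :
    sepOrder (sepJoin p q) ≤ sepOrder q :=
  Finset.card_le_card (sepJoin_separator_subset h)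

theorem sepInv_inter_subset_fst {p q : GSep α} (h : p.1 ∩ p.2 ⊆ q.2) :
    (sepInv p).1 ∩ (sepInv p).2 ⊆ (sepInv q).1 := by
  rwa [sepInv, Finset.inter_comm]

theorem sepOrder_sepMeet_le_of_subset {p q : GSep α} (h : p.1 ∩ p.2 ⊆ q.2) :
    sepOrder (sepMeet p q) ≤ sepOrder q :=
  calc sepOrder (sepMeet p q) = sepOrder (sepJoin (sepInv p) (sepInv q)) :=
      sepOrder_sepInv (sepJoin (sepInv p) (sepInv q))
    _ ≤ sepOrder (sepInv q) := sepOrder_sepJoin_le_of_subset (sepInv_inter_subset_fst h)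
    _ = sepOrder q := sepOrder_sepInv q

end

variable {G : SimpleGraph V} {p q : GSep V}

theorem IsSep.mem_or_mem (hp : IsSep G p) (v : V) : v ∈ p.1 ∨ v ∈ p.2 :=
  Finset.mem_union.mp (hp.1 ▸ Finset.mem_univ v)

theorem IsSep.sepInv (hp : IsSep G p) : IsSep G (sepInv p) :=
  ⟨by rw [_root_.sepInv, Finset.union_comm, hp.1],
    fun a b hab ha hna hb hnb => hp.2 b a hab.symm hb hnb ha hna⟩

theorem IsCliqueSep.sepInv (hp : IsCliqueSep G p) : IsCliqueSep G (sepInv p) :=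
  ⟨hp.1.sepInv, by rw [_root_.sepInv, Finset.inter_comm]; exact hp.2⟩

theorem IsSep.subset_or_subset_of_isClique (hp : IsSep G p) {X : Finset V}
    (hX : G.IsClique (X : Set V)) : X ⊆ p.1 ∨ X ⊆ p.2 := by
  by_contra! h
  obtain ⟨x, hxX, hx1⟩ := Finset.not_subset.mp h.1
  obtain ⟨y, hyX, hy2⟩ := Finset.not_subset.mp h.2
  have hx2 : x ∈ p.2 := (hp.mem_or_mem x).resolve_left hx1
  have hy1 : y ∈ p.1 := (hp.mem_or_mem y).resolve_right hy2
  have hyx : y ≠ x := by rintro rfl; exact hx1 hy1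
  exact hp.2 y x (hX hyX hxX hyx) hy1 hy2 hx2 hx1

theorem IsSep.sepJoin (hp : IsSep G p) (hq : IsSep G q) : IsSep G (sepJoin p q) := by
  refine ⟨?_, fun a b hab _ hna hb hnb => ?_⟩
  · refine Finset.eq_univ_of_forall fun v => ?_
    simp only [_root_.sepJoin, Finset.mem_union, Finset.mem_inter]
    have := hp.mem_or_mem v
    have := hq.mem_or_mem v
    tauto
  · simp only [_root_.sepJoin, Finset.mem_union, Finset.mem_inter, not_and, not_or] at hna hb hnb
    by_cases hap : a ∈ p.2
    · have haq : a ∉ q.2 := hna hap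
      exact hq.2 a b hab ((hq.mem_or_mem a).resolve_right haq) haq hb.2 hnb.2
    · exact hp.2 a b hab ((hp.mem_or_mem a).resolve_right hap) hap hb.1 hnb.1

theorem IsCliqueSep.sepJoin_of_subset (hq : IsCliqueSep G q) (hp : IsSep G p)
    (h : p.1 ∩ p.2 ⊆ q.1) : IsCliqueSep G (sepJoin p q) :=
  ⟨hp.sepJoin hq.1, hq.2.subset (by exact_mod_cast sepJoin_separator_subset h)⟩

theorem IsCliqueSep.sepMeet_of_subset (hq : IsCliqueSep G q) (hp : IsSep G p)
    (h : p.1 ∩ p.2 ⊆ q.2) : IsCliqueSep G (sepMeet p q) :=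
  (hq.sepInv.sepJoin_of_subset hp.sepInv (sepInv_inter_subset_fst h)).sepInv

theorem clique_seps_structurally_submodular_general (G : SimpleGraph V) (k : ℕ)
    (r s : GSep V) (hr : IsCliqueSep G r) (hs : IsCliqueSep G s)
    (hsk : sepOrder s < k) :
    (IsCliqueSep G (sepJoin r s) ∧ sepOrder (sepJoin r s) < k) ∨
    (IsCliqueSep G (sepMeet r s) ∧ sepOrder (sepMeet r s) < k) := by
  rcases hs.1.subset_or_subset_of_isClique hr.2 with h | h
  · exact .inl ⟨hs.sepJoin_of_subset hr.1 h, (sepOrder_sepJoin_le_of_subset h).trans_lt hsk⟩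
  · exact .inr ⟨hs.sepMeet_of_subset hr.1 h, (sepOrder_sepMeet_le_of_subset h).trans_lt hsk⟩

/-- **The clique separations of order `< k` form a structurally submodular
separation system.** -/
theorem clique_seps_structurally_submodular (G : SimpleGraph V) (k : ℕ)
    (r s : GSep V) (hr : IsCliqueSep G r) (hs : IsCliqueSep G s)
    (hrk : sepOrder r < k) (hsk : sepOrder s < k) :
    (IsCliqueSep G (sepJoin r s) ∧ sepOrder (sepJoin r s) < k) ∨
    (IsCliqueSep G (sepMeet r s) ∧ sepOrder (sepMeet r s) < k) :=
  clique_seps_structurally_submodular_general G k r s hr hs hsk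
end

section
/- Let U be a universe of separations, I a finite index set with a partial order ≼, and (A_i | i ∈ I) a family of nonempty *-closed subsets of U that splinters hierarchically with respect to ≼. If K ⊆ I is an antichain in ≼, then the set of extremal elements of ⋃_{k ∈ K} A_k is nested. -/
/-!
Take extremal `a ∈ A i` and `b ∈ A j` with `i, j ∈ K`, and let `m` be the orientation of `a` that
is maximal among the orientations of `S = ⋃_{k ∈ K} A k`. If some orientation of a corner
`m* ⊓ u` lies in `S`, then `m ≤ (m* ⊓ u)*`, so maximality forces `m* ⊓ u = m*`, i.e. `m* ≤ u`.
Since `i` and `j` are incomparable, splintering yields two corners in `S` from different sides of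
`a` (or of `b`); one of them is such a corner `m* ⊓ u` with `u` an orientation of the other
separation, so `a` and `b` are nested.
-/

variable {U : Type*}

/-- `star` is an order-reversing involution: `s** = s` and `r ≤ s ↔ s* ≤ r*`. -/
def OrderReversingInvolution [Lattice U] (star : U → U) : Prop :=
  (∀ s : U, star (star s) = s) ∧ ∀ r s : U, r ≤ s ↔ star s ≤ star r

/-- Two separations are nested if they have comparable orientations. -/
def Nested [Lattice U] (star : U → U) (r s : U) : Prop :=
  r ≤ s ∨ r ≤ star s ∨ star r ≤ s ∨ star r ≤ star s

/-- `c` is a corner separation of `r` and `s`: a meet of orientations of `r`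
and `s`, or the involution of such a meet. -/
def IsCornerM [Lattice U] (star : U → U) (c r s : U) : Prop :=
  ∃ r' s', (r' = r ∨ r' = star r) ∧ (s' = s ∨ s' = star s) ∧
    (c = r' ⊓ s' ∨ c = star (r' ⊓ s'))

/-- The corner separations `c₁` and `c₂` of `r` and `s` are from different
sides of `r`: for orientations with `c₁ = r' ⊓ s'`, some orientation of `c₂`
equals `star r' ⊓ s'` or `star r' ⊓ star s'`. -/
def DiffSides [Lattice U] (star : U → U) (r s c₁ c₂ : U) : Prop :=
  ∃ r' s', (r' = r ∨ r' = star r) ∧ (s' = s ∨ s' = star s) ∧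
    (c₁ = r' ⊓ s' ∨ c₁ = star (r' ⊓ s')) ∧
    (c₂ = star r' ⊓ s' ∨ c₂ = star (star r' ⊓ s') ∨
     c₂ = star r' ⊓ star s' ∨ c₂ = star (star r' ⊓ star s'))

/-- A family `A` of subsets of `U` splinters hierarchically with respect to a
partial order on its index set. -/
def SplintersHier [Lattice U] (star : U → U) {I : Type*} [PartialOrder I]
    (A : I → Set U) : Prop :=
  ∀ i j : I, ∀ a ∈ A i, ∀ b ∈ A j,
    (i < j →
      (∃ c, IsCornerM star c a b ∧ c ∈ A j) ∨
      (∃ c₁ c₂, DiffSides star a b c₁ c₂ ∧ c₁ ∈ A i ∧ c₂ ∈ A i)) ∧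
    (¬ i < j → ¬ j < i →
      ∃ c₁ c₂, ((DiffSides star a b c₁ c₂ ∧ c₁ ∈ A i) ∨
                (DiffSides star b a c₁ c₂ ∧ c₁ ∈ A j)) ∧
        c₂ ∈ A i ∪ A j)

/-- `a` is extremal in `A`: some orientation of `a` is a maximal element of
the set of orientations of elements of `A`. -/
def ExtremalIn [Lattice U] (star : U → U) (A : Set U) (a : U) : Prop :=
  a ∈ A ∧ ∃ a', (a' = a ∨ a' = star a) ∧ (a' ∈ A ∨ star a' ∈ A) ∧
    ∀ b : U, (b ∈ A ∨ star b ∈ A) → a' ≤ b → b = a'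

def orientations [Lattice U] (star : U → U) (S : Set U) : Set U :=
  {x | x ∈ S ∨ star x ∈ S}

namespace OrderReversingInvolution

variable [Lattice U] {star : U → U}

theorem star_star (hstar : OrderReversingInvolution star) (s : U) : star (star s) = s :=
  hstar.1 s

theorem star_le_star (hstar : OrderReversingInvolution star) {r s : U} (h : r ≤ s) :
    star s ≤ star r :=
  (hstar.2 r s).1 h

theorem orientation_star (hstar : OrderReversingInvolution star) {r x : U}
    (hx : x = r ∨ x = star r) : star x = r ∨ star x = star r := by
  rcases hx with rfl | rfl
  · exact Or.inr rfl
  · exact Or.inl (hstar.star_star r)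

end OrderReversingInvolution

section Nested

variable [Lattice U] {star : U → U}

theorem nested_of_le {r s x y : U} (hx : x = r ∨ x = star r) (hy : y = s ∨ y = star s)
    (h : x ≤ y) : Nested star r s := by
  unfold Nested
  rcases hx with rfl | rfl <;> rcases hy with rfl | rfl <;> tauto

theorem Nested.symm (hstar : OrderReversingInvolution star) {r s : U}
    (h : Nested star r s) : Nested star s r := by
  rcases h with h | h | h | h
  · exact nested_of_le (Or.inr rfl) (Or.inr rfl) (hstar.star_le_star h)
  · exact nested_of_le (hstar.orientation_star (Or.inr rfl)) (Or.inr rfl) (hstar.star_le_star h)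
  · exact nested_of_le (Or.inr rfl) (hstar.orientation_star (Or.inr rfl)) (hstar.star_le_star h)
  · exact nested_of_le (hstar.orientation_star (Or.inr rfl))
      (hstar.orientation_star (Or.inr rfl)) (hstar.star_le_star h)

end Nested

section Extremal

variable [Lattice U] {star : U → U}

theorem ExtremalIn.exists_maximal {A : Set U} {a : U} (h : ExtremalIn star A a) :
    ∃ m, (m = a ∨ m = star a) ∧ Maximal (· ∈ orientations star A) m := by
  obtain ⟨-, m, hma, hmA, hmax⟩ := h
  exact ⟨m, hma, hmA, fun b hb hle => (hmax b hb hle).le⟩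

theorem star_le_of_maximal_of_corner_mem (hstar : OrderReversingInvolution star)
    {S : Set U} {m u c : U} (hm : Maximal (· ∈ orientations star S) m) (hcS : c ∈ S)
    (hc : c = star m ⊓ u ∨ c = star (star m ⊓ u)) : star m ≤ u := by
  have hmem : star (star m ⊓ u) ∈ orientations star S := by
    rcases hc with rfl | rfl
    · exact Or.inr (by rwa [hstar.star_star])
    · exact Or.inl hcS
  have hle : m ≤ star (star m ⊓ u) := by
    simpa only [hstar.star_star] using hstar.star_le_star (inf_le_left : star m ⊓ u ≤ star m)
  have hcorner : star m ⊓ u = star m := by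
    simpa only [hstar.star_star] using congrArg star (hm.eq_of_le hmem hle).symm
  exact hcorner ▸ inf_le_right

theorem nested_of_diffSides_of_maximal (hstar : OrderReversingInvolution star)
    {S : Set U} {a b m c₁ c₂ : U} (hma : m = a ∨ m = star a)
    (hm : Maximal (· ∈ orientations star S) m) (hd : DiffSides star a b c₁ c₂)
    (hc₁ : c₁ ∈ S) (hc₂ : c₂ ∈ S) : Nested star a b := by
  obtain ⟨r', s', hr', hs', hc₁', hc₂'⟩ := hd
  have hsm : star m = a ∨ star m = star a := hstar.orientation_star hma
  have hr'm : r' = star m ∨ star r' = star m := by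
    rcases hma with rfl | rfl <;> rcases hr' with rfl | rfl <;> simp [hstar.star_star]
  rcases hr'm with rfl | hr'm
  · exact nested_of_le hsm hs' (star_le_of_maximal_of_corner_mem hstar hm hc₁ hc₁')
  · obtain ⟨u, hu, hc⟩ : ∃ u, (u = b ∨ u = star b) ∧
        (c₂ = star m ⊓ u ∨ c₂ = star (star m ⊓ u)) := by
      rw [hr'm] at hc₂'
      rcases hc₂' with h | h | h | h
      exacts [⟨s', hs', .inl h⟩, ⟨s', hs', .inr h⟩,
        ⟨star s', hstar.orientation_star hs', .inl h⟩,
        ⟨star s', hstar.orientation_star hs', .inr h⟩]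
    exact nested_of_le hsm hu (star_le_of_maximal_of_corner_mem hstar hm hc₂ hc)

end Extremal

theorem extremal_elements_nested_general [Lattice U]
    (star : U → U) (hstar : OrderReversingInvolution star)
    {I : Type*} [PartialOrder I] (A : I → Set U)
    (hsp : SplintersHier star A)
    (K : Set I) (hK : ∀ k₁ ∈ K, ∀ k₂ ∈ K, k₁ ≤ k₂ → k₁ = k₂) :
    ∀ a b : U, ExtremalIn star (⋃ k ∈ K, A k) a →
      ExtremalIn star (⋃ k ∈ K, A k) b → Nested star a b := by
  intro a b ha hb
  obtain ⟨i, hi, hai⟩ := Set.mem_iUnion₂.1 ha.1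
  obtain ⟨j, hj, hbj⟩ := Set.mem_iUnion₂.1 hb.1
  have hS : A i ∪ A j ⊆ ⋃ k ∈ K, A k :=
    Set.union_subset (Set.subset_biUnion_of_mem hi) (Set.subset_biUnion_of_mem hj)
  obtain ⟨c₁, c₂, hd, hc₂⟩ := (hsp i j a hai b hbj).2
    (fun h => h.ne (hK i hi j hj h.le)) (fun h => h.ne (hK j hj i hi h.le))
  obtain ⟨ma, hma, hma_max⟩ := ha.exists_maximal
  obtain ⟨mb, hmb, hmb_max⟩ := hb.exists_maximal
  rcases hd with ⟨hd, hc₁⟩ | ⟨hd, hc₁⟩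
  · exact nested_of_diffSides_of_maximal hstar hma hma_max hd (hS (.inl hc₁)) (hS hc₂)
  · exact (nested_of_diffSides_of_maximal hstar hmb hmb_max hd (hS (.inr hc₁)) (hS hc₂)).symm hstar

/-- **The extremal elements of the union over an antichain are nested.** -/
theorem extremal_elements_nested [Lattice U] [Fintype U]
    (star : U → U) (hstar : OrderReversingInvolution star)
    {I : Type*} [Fintype I] [PartialOrder I] (A : I → Set U)
    (hne : ∀ i, (A i).Nonempty) (hclosed : ∀ i, ∀ a ∈ A i, star a ∈ A i)
    (hsp : SplintersHier star A)
    (K : Set I) (hK : ∀ k₁ ∈ K, ∀ k₂ ∈ K, k₁ ≤ k₂ → k₁ = k₂) :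
    ∀ a b : U, ExtremalIn star (⋃ k ∈ K, A k) a →
      ExtremalIn star (⋃ k ∈ K, A k) b → Nested star a b :=
  extremal_elements_nested_general star hstar A hsp K hK
end
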